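/- Let G be a graph on n vertices with independence number α(G) ≤ 2 such that oh(G) < ⌈n/2⌉, and such that every proper induced subgraph G′ of G satisfies oh(G′) ≥ ⌈|G′|/2⌉. Then n is odd. -/

import Mathlib

open SimpleGraph

/-- The spanning subgraph of `G` consisting of the edges that are bichromatic
(i.e. whose two endpoints receive different colors) under the 2-coloring `c`. -/
def SimpleGraph.bichromaticSubgraph {V : Type*} (G : SimpleGraph V) (c : V → Bool) :
    SimpleGraph V where
  Adj u v := G.Adj u v ∧ c u ≠ c v
  symm := ⟨fun u v h => ⟨h.1.symm, h.2.symm⟩⟩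
  loopless := ⟨fun v h => h.2 rfl⟩

/-- `G` contains an odd `K t` minor: there are `t` pairwise disjoint nonempty branch sets
and a 2-coloring of the vertices such that each branch set induces a connected subgraph
using only bichromatic edges (so it carries a spanning tree all of whose edges are
bichromatic), and every two branch sets are joined by a monochromatic edge of `G`. -/
def SimpleGraph.HasOddKMinor {V : Type*} (G : SimpleGraph V) (t : ℕ) : Prop :=
  ∃ (c : V → Bool) (B : Fin t → Set V),
    (∀ i, (B i).Nonempty) ∧
    (Pairwise fun i j => Disjoint (B i) (B j)) ∧
    (∀ i, ((G.bichromaticSubgraph c).induce (B i)).Connected) ∧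
    (∀ i j, i ≠ j → ∃ u ∈ B i, ∃ v ∈ B j, G.Adj u v ∧ c u = c v)

/-- `oh G` is the largest `t` such that `G` contains an odd `K t` minor. -/
noncomputable def SimpleGraph.oh {V : Type*} (G : SimpleGraph V) : ℕ :=
  sSup {t | G.HasOddKMinor t}

/-- The independence number of `G`. -/
noncomputable def SimpleGraph.indepNum' {V : Type*} (G : SimpleGraph V) : ℕ :=
  Gᶜ.cliqueNum

/-- The join of two vertex-disjoint graphs: take the disjoint union and add all
edges between the two parts. -/
def SimpleGraph.joinG {α β : Type*} (G : SimpleGraph α) (H : SimpleGraph β) :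
    SimpleGraph (α ⊕ β) where
  Adj u v := match u, v with
    | Sum.inl a, Sum.inl b => G.Adj a b
    | Sum.inr a, Sum.inr b => H.Adj a b
    | _, _ => True
  symm := ⟨by rintro (a | a) (b | b) h <;> first | exact h.symm | trivial⟩
  loopless := ⟨by rintro (a | a) h <;> exact h.ne rfl⟩

/-! Deleting one vertex of a graph of even order `n` leaves `n - 1` vertices, and
`⌈(n - 1)/2⌉ = ⌈n/2⌉`. Since odd `K_t` minors pass from induced subgraphs to the whole
graph, minimality forces `oh G ≥ ⌈n/2⌉`. -/

namespace SimpleGraph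

variable {V W : Type*}

lemma hasOddKMinor_zero (G : SimpleGraph V) : G.HasOddKMinor 0 :=
  ⟨fun _ => false, Fin.elim0, fun i => i.elim0, fun i => i.elim0,
    fun i => i.elim0, fun i => i.elim0⟩

lemma HasOddKMinor.le_card [Fintype V] {G : SimpleGraph V} {t : ℕ} (h : G.HasOddKMinor t) :
    t ≤ Fintype.card V := by
  obtain ⟨-, B, hne, hdisj, -, -⟩ := h
  choose f hf using hne
  have hinj : Function.Injective f := fun i j hij => by
    by_contra hij'
    exact (hdisj hij').ne_of_mem (hf i) (hij ▸ hf j) rfl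
  simpa using Fintype.card_le_of_injective f hinj

lemma HasOddKMinor.map {H : SimpleGraph W} {G : SimpleGraph V} (f : H ↪g G) {t : ℕ}
    (h : H.HasOddKMinor t) : G.HasOddKMinor t := by
  obtain ⟨c, B, hne, hdisj, hconn, hjoin⟩ := h
  set c' : V → Bool := Function.extend f c fun _ => false
  have hc' : ∀ x, c' (f x) = c x := f.injective.extend_apply c _
  refine ⟨c', fun i => f '' B i, fun i => (hne i).image f,
    fun i j hij => (Set.disjoint_image_iff f.injective).mpr (hdisj hij), fun i => ?_, ?_⟩
  · let e : (H.bichromaticSubgraph c).induce (B i) ≃g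
        (G.bichromaticSubgraph c').induce (f '' B i) :=
      ⟨Equiv.Set.image f (B i) f.injective, by
        rintro ⟨x, hx⟩ ⟨y, hy⟩
        simp [bichromaticSubgraph, hc']⟩
    exact e.connected_iff.mp (hconn i)
  · intro i j hij
    obtain ⟨u, hu, v, hv, huv, hcol⟩ := hjoin i j hij
    exact ⟨f u, Set.mem_image_of_mem f hu, f v, Set.mem_image_of_mem f hv,
      f.map_adj_iff.mpr huv, by rw [hc', hc', hcol]⟩

lemma oh_le_of_embedding [Fintype V] {H : SimpleGraph W} {G : SimpleGraph V} (f : H ↪g G) :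
    H.oh ≤ G.oh :=
  csSup_le_csSup ⟨Fintype.card V, fun _ ht => ht.le_card⟩ ⟨0, hasOddKMinor_zero H⟩
    fun _ ht => ht.map f

end SimpleGraph

theorem statement14_general {V : Type*} [Fintype V] (G : SimpleGraph V)
    (hoh : G.oh < (Fintype.card V + 1) / 2)
    (hmin : ∀ s : Finset V, s ≠ Finset.univ →
      (s.card + 1) / 2 ≤ (G.induce (s : Set V)).oh) :
    Odd (Fintype.card V) := by
  classical
  by_contra hodd
  obtain ⟨k, hk⟩ := Nat.not_odd_iff_even.mp hodd
  obtain ⟨v⟩ : Nonempty V := Fintype.card_pos_iff.mp (by omega)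
  have hcard : (Finset.univ.erase v).card = Fintype.card V - 1 := by
    rw [Finset.card_erase_of_mem (Finset.mem_univ v), Finset.card_univ]
  have hsub := hmin (Finset.univ.erase v) fun h =>
    Finset.erase_eq_self.mp h (Finset.mem_univ v)
  have hle := oh_le_of_embedding (Embedding.induce (G := G) (Finset.univ.erase v : Set V))
  omega

theorem statement14 {V : Type*} [Fintype V] (G : SimpleGraph V)
    (hα : G.indepNum' ≤ 2) (hoh : G.oh < (Fintype.card V + 1) / 2)
    (hmin : ∀ s : Finset V, s ≠ Finset.univ →
      (s.card + 1) / 2 ≤ (G.induce (s : Set V)).oh) :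
    Odd (Fintype.card V) :=
  statement14_general G hoh hmin
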